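/- Let N ≥ 3 and fix V ∈ ℝ^N with v_1 ≠ v_2. Define γ₁ := e_1 + Σ_{i=3}^N ((v_i − v_2)/(v_1 − v_2)) e_i and γ₂ := e_2 − Σ_{i=3}^N ((v_i − v_1)/(v_1 − v_2)) e_i. Then span{γ₁, γ₂} = span{V, |V|²𝟙 − 𝖯(V)V}, where 𝖯(V) = Σᵢ vᵢ, provided |V|²𝟙 − 𝖯(V)V ≠ 0. In particular, V = v_1γ₁ + v_2γ₂. -/
import Mathlib


theorem span_gamma_eq_span_V_W (N : ℕ) (hN : 3 ≤ N)
    (V : Fin N → ℝ) (hv : V ⟨0, by omega⟩ ≠ V ⟨1, by omega⟩)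
    (γ₁ γ₂ W : Fin N → ℝ)
    (hγ₁ : ∀ i : Fin N, γ₁ i =
      if i.val = 0 then 1 else if i.val = 1 then 0
      else (V i - V ⟨1, by omega⟩) / (V ⟨0, by omega⟩ - V ⟨1, by omega⟩))
    (hγ₂ : ∀ i : Fin N, γ₂ i =
      if i.val = 0 then 0 else if i.val = 1 then 1
      else -((V i - V ⟨0, by omega⟩) / (V ⟨0, by omega⟩ - V ⟨1, by omega⟩)))
    (hW : W = fun i => (∑ j, (V j) ^ 2) * 1 - (∑ j, V j) * V i)
    (hWne : W ≠ 0) :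
    Submodule.span ℝ {γ₁, γ₂} = Submodule.span ℝ {V, W} ∧
      V = V ⟨0, by omega⟩ • γ₁ + V ⟨1, by omega⟩ • γ₂ := by
  have hab : V ⟨0, by omega⟩ - V ⟨1, by omega⟩ ≠ 0 := sub_ne_zero.mpr hv
  set a : ℝ := V ⟨0, by omega⟩ with ha
  set b : ℝ := V ⟨1, by omega⟩ with hb
  set S : ℝ := ∑ j, (V j) ^ 2 with hSdef
  set P : ℝ := ∑ j, V j with hPdef
  have hS : S ≠ 0 := by
    intro h
    have hz : ∀ j : Fin N, (V j) ^ 2 = 0 := by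
      intro j
      exact (Finset.sum_eq_zero_iff_of_nonneg
        (fun j _ => sq_nonneg (V j))).mp h j (Finset.mem_univ j)
    have hz' : ∀ j : Fin N, V j = 0 := fun j => by
      have := hz j; nlinarith [this]
    exact hv (by rw [ha, hb, hz', hz'])
  have hVeq : V = a • γ₁ + b • γ₂ := by
    funext i
    simp only [Pi.add_apply, Pi.smul_apply, smul_eq_mul, hγ₁ i, hγ₂ i]
    split_ifs with h1 h2
    · have hi : i = ⟨0, by omega⟩ := Fin.ext h1
      have hVi : V i = a := by rw [hi]
      rw [hVi]; ring
    · have hi : i = ⟨1, by omega⟩ := Fin.ext h2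
      have hVi : V i = b := by rw [hi]
      rw [hVi]; ring
    · field_simp
      ring
  have hWeq : W = (S - P * a) • γ₁ + (S - P * b) • γ₂ := by
    funext i
    simp only [hW, Pi.add_apply, Pi.smul_apply, smul_eq_mul, hγ₁ i, hγ₂ i]
    split_ifs with h1 h2
    · have hi : i = ⟨0, by omega⟩ := Fin.ext h1
      have hVi : V i = a := by rw [hi]
      rw [hVi]; ring
    · have hi : i = ⟨1, by omega⟩ := Fin.ext h2
      have hVi : V i = b := by rw [hi]
      rw [hVi]; ring
    · field_simp
      ring
  have hD : (a - b) * S ≠ 0 := mul_ne_zero hab hS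
  constructor
  · apply le_antisymm
    · rw [Submodule.span_le]
      rintro x (rfl | rfl)
      · rw [SetLike.mem_coe, Submodule.mem_span_pair]
        refine ⟨(S - P * b) / ((a - b) * S), -(b / ((a - b) * S)), ?_⟩
        funext i
        have h1 := congrFun hVeq i
        have h2 := congrFun hWeq i
        simp only [Pi.add_apply, Pi.smul_apply, smul_eq_mul] at h1 h2 ⊢
        rw [h1, h2]
        field_simp
        ring
      · rw [SetLike.mem_coe, Submodule.mem_span_pair]
        refine ⟨-((S - P * a) / ((a - b) * S)), a / ((a - b) * S), ?_⟩
        funext i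
        have h1 := congrFun hVeq i
        have h2 := congrFun hWeq i
        simp only [Pi.add_apply, Pi.smul_apply, smul_eq_mul] at h1 h2 ⊢
        rw [h1, h2]
        field_simp
        ring
    · rw [Submodule.span_le]
      rintro x (rfl | rfl)
      · rw [SetLike.mem_coe, Submodule.mem_span_pair]
        exact ⟨a, b, hVeq.symm⟩
      · rw [SetLike.mem_coe, Submodule.mem_span_pair]
        exact ⟨S - P * a, S - P * b, hWeq.symm⟩
  · exact hVeq
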